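/- arXiv:2309.14524 — 6 statements merged into one kernel-verified Lean document; each statement's English description precedes it below -/
import Mathlib

section
/- Let a : Fin (n+1) → ℕ be strictly increasing, let N ≥ 1, and suppose the range of a is a Sidon set modulo N. Then the graph S_N(a) contains no cycle of length 4: there do not exist vertices w, x, y, z with w adjacent to x, x adjacent to y, y adjacent to z, z adjacent to w, w ≠ y and x ≠ z. -/
/-- A set `A ⊆ ℕ` is a Sidon set modulo `N` if the sums of pairs of its
elements are pairwise distinct modulo `N`. -/
def IsSidonModSet (N : ℕ) (A : Set ℕ) : Prop :=
  ∀ a ∈ A, ∀ b ∈ A, ∀ c ∈ A, ∀ d ∈ A,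
    a + b ≡ c + d [MOD N] → (a = c ∧ b = d) ∨ (a = d ∧ b = c)

/-- The graph `S_N(a)` on `ZMod (2N)`: distinct `x, y` are adjacent iff there are
`r : Fin (n+1)` and `v : ZMod (2N)` with `v.val` even such that
`{x, y} = {v, v + (2 (a r) - 1)}`. -/
def SGraph (n N : ℕ) (a : Fin (n + 1) → ℕ) : SimpleGraph (ZMod (2 * N)) where
  Adj x y := x ≠ y ∧ ∃ r : Fin (n + 1), ∃ v : ZMod (2 * N), Even v.val ∧
    s(x, y) = s(v, v + (2 * (a r : ZMod (2 * N)) - 1))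
  symm := by
    constructor
    rintro x y ⟨hxy, r, v, hv, h⟩
    exact ⟨hxy.symm, r, v, hv, Sym2.eq_swap.trans h⟩
  loopless := by
    constructor
    rintro x ⟨hxx, -⟩
    exact hxx rfl

/-!
Reduce modulo 2 (possible since the modulus `2N` is even): every edge of `S_N(a)` joins an even
vertex `v` to the odd vertex `v + d` with `d = 2 a_r - 1` odd, so the graph is bipartite and a
4-cycle `w x y z` with `w, y` even reads `x = w + d₁ = y + d₂`, `z = y + d₃ = w + d₄`. Hence
`d₁ + d₃ = d₂ + d₄`, i.e. `2(a₁ + a₃) ≡ 2(a₂ + a₄) (mod 2N)`, so `a₁ + a₃ ≡ a₂ + a₄ (mod N)` and the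
Sidon property gives `d₁ = d₂` (forcing `w = y`) or `d₁ = d₄` (forcing `x = z`).
-/

theorem ZMod.even_of_even_val {m : ℕ} {v : ZMod m} (hv : Even v.val) : Even v := by
  rcases m with _ | m
  · exact Int.natAbs_even.mp hv
  · simpa only [eq_natCast, ZMod.natCast_zmod_val] using hv.map (Nat.castRingHom (ZMod (m + 1)))

section ParityGraph

variable {G : Type*} [AddCommGroup G] (π : G →+ ZMod 2) (D : Set G)

def ParityStep (x y : G) : Prop := π x = 0 ∧ ∃ d ∈ D, y = x + d

abbrev parityGraph : SimpleGraph G := SimpleGraph.fromRel (ParityStep π D)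

variable {π D}

theorem parityGraph_adj_even_or_even {x y : G} (h : (parityGraph π D).Adj x y) :
    π x = 0 ∨ π y = 0 := by
  rcases h with ⟨-, ⟨hx, -⟩ | ⟨hy, -⟩⟩
  exacts [.inl hx, .inr hy]

theorem parityGraph_adj_eq_add_of_even (hD : ∀ d ∈ D, π d = 1) {x y : G}
    (h : (parityGraph π D).Adj x y) (hx : π x = 0) : ∃ d ∈ D, y = x + d := by
  rcases h with ⟨-, ⟨-, hxy⟩ | ⟨hy, d, hd, rfl⟩⟩
  · exact hxy
  · rw [map_add, hy, hD d hd] at hx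
    exact absurd hx (by decide)

theorem parityGraph_adj_odd_of_even (hD : ∀ d ∈ D, π d = 1) {x y : G}
    (h : (parityGraph π D).Adj x y) (hx : π x = 0) : π y = 1 := by
  obtain ⟨d, hd, rfl⟩ := parityGraph_adj_eq_add_of_even hD h hx
  rw [map_add, hx, hD d hd, zero_add]

variable (hD : ∀ d ∈ D, π d = 1)
  (hS : ∀ d₁ ∈ D, ∀ d₂ ∈ D, ∀ d₃ ∈ D, ∀ d₄ ∈ D, d₁ + d₃ = d₂ + d₄ → d₁ = d₂ ∨ d₁ = d₄)
include hD hS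

theorem parityGraph_no_four_cycle_of_even {w x y z : G} (hwx : (parityGraph π D).Adj w x)
    (hxy : (parityGraph π D).Adj x y) (hyz : (parityGraph π D).Adj y z)
    (hzw : (parityGraph π D).Adj z w) (hw : π w = 0) : w = y ∨ x = z := by
  have hy : π y = 0 := by
    refine (parityGraph_adj_even_or_even hxy).resolve_left ?_
    rw [parityGraph_adj_odd_of_even hD hwx hw]
    decide
  obtain ⟨d₁, hd₁, hx₁⟩ := parityGraph_adj_eq_add_of_even hD hwx hw
  obtain ⟨d₂, hd₂, hx₂⟩ := parityGraph_adj_eq_add_of_even hD hxy.symm hy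
  obtain ⟨d₃, hd₃, hz₃⟩ := parityGraph_adj_eq_add_of_even hD hyz hy
  obtain ⟨d₄, hd₄, hz₄⟩ := parityGraph_adj_eq_add_of_even hD hzw.symm hw
  have hsum : d₁ + d₃ = d₂ + d₄ := by
    linear_combination (norm := abel) hx₂ - hx₁ + hz₄ - hz₃
  rcases hS d₁ hd₁ d₂ hd₂ d₃ hd₃ d₄ hd₄ hsum with rfl | rfl
  · exact .inl (add_right_cancel (hx₁.symm.trans hx₂))
  · exact .inr (hx₁.trans hz₄.symm)

theorem parityGraph_no_four_cycle {w x y z : G} (hwx : (parityGraph π D).Adj w x)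
    (hxy : (parityGraph π D).Adj x y) (hyz : (parityGraph π D).Adj y z)
    (hzw : (parityGraph π D).Adj z w) : w = y ∨ x = z := by
  rcases parityGraph_adj_even_or_even hwx with hw | hx
  · exact parityGraph_no_four_cycle_of_even hD hS hwx hxy hyz hzw hw
  · exact (parityGraph_no_four_cycle_of_even hD hS hxy hyz hzw hwx hx).symm.imp_left Eq.symm

end ParityGraph

abbrev parityHom (N : ℕ) : ZMod (2 * N) →+ ZMod 2 :=
  (ZMod.castHom (dvd_mul_right 2 N) (ZMod 2)).toAddMonoidHom

def oddDiffs {ι : Type*} (N : ℕ) (a : ι → ℕ) : Set (ZMod (2 * N)) :=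
  Set.range fun r => 2 * (a r : ZMod (2 * N)) - 1

theorem parityHom_eq_one_of_mem_oddDiffs {ι : Type*} {N : ℕ} {a : ι → ℕ} :
    ∀ d ∈ oddDiffs N a, parityHom N d = 1 := by
  rintro _ ⟨r, rfl⟩
  simp only [parityHom, RingHom.toAddMonoidHom_eq_coe, AddMonoidHom.coe_coe, map_sub, map_mul,
    map_natCast, map_ofNat, map_one]
  rw [show (2 : ZMod 2) = 0 from rfl, zero_mul, zero_sub]
  decide

theorem IsSidonModSet.oddDiffs_add_eq_add {ι : Type*} {N : ℕ} {a : ι → ℕ} (hS : IsSidonModSet N (Set.range a)) :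
    ∀ d₁ ∈ oddDiffs N a, ∀ d₂ ∈ oddDiffs N a, ∀ d₃ ∈ oddDiffs N a, ∀ d₄ ∈ oddDiffs N a,
      d₁ + d₃ = d₂ + d₄ → d₁ = d₂ ∨ d₁ = d₄ := by
  rintro _ ⟨r₁, rfl⟩ _ ⟨r₂, rfl⟩ _ ⟨r₃, rfl⟩ _ ⟨r₄, rfl⟩ h
  dsimp only at h ⊢
  have hmod : a r₁ + a r₃ ≡ a r₂ + a r₄ [MOD N] := by
    refine Nat.ModEq.mul_left_cancel' two_ne_zero ((ZMod.natCast_eq_natCast_iff _ _ _).mp ?_)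
    push_cast
    linear_combination h
  rcases hS _ ⟨r₁, rfl⟩ _ ⟨r₃, rfl⟩ _ ⟨r₂, rfl⟩ _ ⟨r₄, rfl⟩ hmod with ⟨h₁₂, -⟩ | ⟨h₁₄, -⟩
  exacts [.inl (by rw [h₁₂]), .inr (by rw [h₁₄])]

theorem sGraph_le_parityGraph (n N : ℕ) (a : Fin (n + 1) → ℕ) :
    SGraph n N a ≤ parityGraph (parityHom N) (oddDiffs N a) := by
  rintro x y ⟨hxy, r, v, hv, he⟩
  have hv₀ : parityHom N v = 0 := by
    obtain ⟨u, rfl⟩ := ZMod.even_of_even_val hv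
    rw [map_add, CharTwo.add_self_eq_zero]
  refine ⟨hxy, ?_⟩
  rcases Sym2.eq_iff.mp he with ⟨rfl, rfl⟩ | ⟨rfl, rfl⟩
  exacts [.inl ⟨hv₀, _, ⟨r, rfl⟩, rfl⟩, .inr ⟨hv₀, _, ⟨r, rfl⟩, rfl⟩]

theorem stmt_3_general (n N : ℕ) (a : Fin (n + 1) → ℕ)
    (hS : IsSidonModSet N (Set.range a)) :
    ¬ ∃ w x y z : ZMod (2 * N),
        (SGraph n N a).Adj w x ∧ (SGraph n N a).Adj x y ∧
        (SGraph n N a).Adj y z ∧ (SGraph n N a).Adj z w ∧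
        w ≠ y ∧ x ≠ z := by
  rintro ⟨w, x, y, z, hwx, hxy, hyz, hzw, hwy, hxz⟩
  have hle := sGraph_le_parityGraph n N a
  rcases parityGraph_no_four_cycle parityHom_eq_one_of_mem_oddDiffs hS.oddDiffs_add_eq_add
    (hle hwx) (hle hxy) (hle hyz) (hle hzw) with h | h
  exacts [hwy h, hxz h]

theorem stmt_3 (n N : ℕ) (hN : 1 ≤ N) (a : Fin (n + 1) → ℕ)
    (ha : StrictMono a) (hS : IsSidonModSet N (Set.range a)) :
    ¬ ∃ w x y z : ZMod (2 * N),
        (SGraph n N a).Adj w x ∧ (SGraph n N a).Adj x y ∧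
        (SGraph n N a).Adj y z ∧ (SGraph n N a).Adj z w ∧
        w ≠ y ∧ x ≠ z :=
  stmt_3_general n N a hS
end

section
/- Let a : Fin (n+1) → ℕ be strictly increasing, N ≥ 1, and suppose the range of a is a Sidon set modulo N. Then the graph S_N(a) admits an edge-label-preserving polarity at every edge: for every p : Fin (n+1) and every v : ZMod (2N) with v.val even, there exists a graph automorphism φ of S_N(a) such that φ ∘ φ is the identity, φ exchanges the vertices v and v + (2·(a p) − 1), φ maps every vertex whose representative is even to a vertex whose representative is odd, and for every q : Fin (n+1), φ maps every edge with label a q to an edge with label a q. -/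
/-!
The polarity is the reflection `x ↦ c - x` in `c = 2v + (2 a_p - 1)`. It swaps `v` and
`v + (2 a_p - 1)`, and since `c` is odd it exchanges the two parity classes. An edge
`{w, w + d}` with `w` even and `d = 2 a_q - 1` goes to `{w', w' + d}` with `w' = c - w - d`,
which is even again, so the reflection is an automorphism preserving every label.
-/

namespace ZMod

variable {m : ℕ} (h : 2 ∣ m)

theorem even_val_iff_castHom_eq_zero (x : ZMod m) : Even x.val ↔ castHom h (ZMod 2) x = 0 := by
  rcases m with _ | m
  · exact Int.natAbs_even.trans intCast_eq_zero_iff_even.symm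
  · rw [castHom_apply, ← natCast_val, natCast_eq_zero_iff_even]

theorem odd_val_iff_castHom_eq_one (x : ZMod m) : Odd x.val ↔ castHom h (ZMod 2) x = 1 := by
  rcases m with _ | m
  · exact Int.natAbs_odd.trans intCast_eq_one_iff_odd.symm
  · rw [castHom_apply, ← natCast_val, natCast_eq_one_iff_odd]

end ZMod

section Parity

open ZMod

variable {N : ℕ}

theorem odd_val_two_mul_natCast_sub_one (k : ℕ) : Odd (2 * (k : ZMod (2 * N)) - 1).val := by
  rw [odd_val_iff_castHom_eq_one (dvd_mul_right 2 N), map_sub, map_mul, map_natCast, map_ofNat,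
    map_one, show (2 : ZMod 2) = 0 from rfl, zero_mul, zero_sub]
  rfl

theorem odd_val_sub_of_even {c x : ZMod (2 * N)} (hc : Odd c.val) (hx : Even x.val) :
    Odd (c - x).val := by
  rw [odd_val_iff_castHom_eq_one (dvd_mul_right 2 N)] at hc ⊢
  rw [even_val_iff_castHom_eq_zero (dvd_mul_right 2 N)] at hx
  rw [map_sub, hc, hx, sub_zero]

theorem even_val_sub_of_odd {c x : ZMod (2 * N)} (hc : Odd c.val) (hx : Odd x.val) :
    Even (c - x).val := by
  rw [odd_val_iff_castHom_eq_one (dvd_mul_right 2 N)] at hc hx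
  rw [even_val_iff_castHom_eq_zero (dvd_mul_right 2 N), map_sub, hc, hx, sub_self]

theorem odd_val_add_add_of_even {v d : ZMod (2 * N)} (hv : Even v.val) (hd : Odd d.val) :
    Odd (v + (v + d)).val := by
  rw [odd_val_iff_castHom_eq_one (dvd_mul_right 2 N)] at hd ⊢
  rw [even_val_iff_castHom_eq_zero (dvd_mul_right 2 N)] at hv
  rw [map_add, map_add, hv, hd, zero_add, zero_add]

theorem exists_even_edge_sub {c w d : ZMod (2 * N)} (hc : Odd c.val) (hw : Even w.val)
    (hd : Odd d.val) :
    ∃ w' : ZMod (2 * N), Even w'.val ∧ s(c - w, c - (w + d)) = s(w', w' + d) :=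
  ⟨c - w - d, even_val_sub_of_odd (odd_val_sub_of_even hc hw) hd, by
    rw [Sym2.eq_swap, sub_add_cancel, sub_add_eq_sub_sub]⟩

end Parity

namespace SGraph

variable {n N : ℕ} {a : Fin (n + 1) → ℕ} {c : ZMod (2 * N)}

theorem adj_sub_left (hc : Odd c.val) {x y : ZMod (2 * N)} (h : (SGraph n N a).Adj x y) :
    (SGraph n N a).Adj (c - x) (c - y) := by
  obtain ⟨hxy, r, w, hw, hxy_eq⟩ := h
  obtain ⟨w', hw', hw'_eq⟩ := exists_even_edge_sub hc hw (odd_val_two_mul_natCast_sub_one (a r))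
  refine ⟨(hxy <| sub_right_injective ·), r, w', hw', ?_⟩
  rw [← hw'_eq]
  rcases Sym2.eq_iff.mp hxy_eq with ⟨rfl, rfl⟩ | ⟨rfl, rfl⟩
  · rfl
  · exact Sym2.eq_swap

variable (n a)

def reflection (hc : Odd c.val) : SGraph n N a ≃g SGraph n N a where
  toEquiv := Equiv.subLeft c
  map_rel_iff' {x y} :=
    ⟨fun h => by simpa using adj_sub_left hc h, adj_sub_left hc⟩

@[simp]
theorem reflection_apply (hc : Odd c.val) (x : ZMod (2 * N)) : reflection n a hc x = c - x :=
  rfl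

end SGraph

theorem stmt_7_general (n N : ℕ) (a : Fin (n + 1) → ℕ) :
    ∀ p : Fin (n + 1), ∀ v : ZMod (2 * N), Even v.val →
      ∃ φ : SGraph n N a ≃g SGraph n N a,
        (∀ x : ZMod (2 * N), φ (φ x) = x) ∧
        φ v = v + (2 * (a p : ZMod (2 * N)) - 1) ∧
        φ (v + (2 * (a p : ZMod (2 * N)) - 1)) = v ∧
        (∀ x : ZMod (2 * N), Even x.val → Odd (φ x).val) ∧
        (∀ q : Fin (n + 1), ∀ w : ZMod (2 * N), Even w.val →
          ∃ w' : ZMod (2 * N), Even w'.val ∧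
            s(φ w, φ (w + (2 * (a q : ZMod (2 * N)) - 1)))
              = s(w', w' + (2 * (a q : ZMod (2 * N)) - 1))) := by
  intro p v hv
  have hc := odd_val_add_add_of_even hv (odd_val_two_mul_natCast_sub_one (a p))
  exact ⟨SGraph.reflection n a hc, fun x => by simp, by simp, by simp,
    fun x hx => odd_val_sub_of_even hc hx,
    fun q w hw => exists_even_edge_sub hc hw (odd_val_two_mul_natCast_sub_one (a q))⟩

/-- `S_N(a)` admits an edge-label-preserving polarity at every edge. -/
theorem stmt_7 (n N : ℕ) (hN : 1 ≤ N) (a : Fin (n + 1) → ℕ)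
    (ha : StrictMono a) (hS : IsSidonModSet N (Set.range a)) :
    ∀ p : Fin (n + 1), ∀ v : ZMod (2 * N), Even v.val →
      ∃ φ : SGraph n N a ≃g SGraph n N a,
        (∀ x : ZMod (2 * N), φ (φ x) = x) ∧
        φ v = v + (2 * (a p : ZMod (2 * N)) - 1) ∧
        φ (v + (2 * (a p : ZMod (2 * N)) - 1)) = v ∧
        (∀ x : ZMod (2 * N), Even x.val → Odd (φ x).val) ∧
        (∀ q : Fin (n + 1), ∀ w : ZMod (2 * N), Even w.val →
          ∃ w' : ZMod (2 * N), Even w'.val ∧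
            s(φ w, φ (w + (2 * (a q : ZMod (2 * N)) - 1)))
              = s(w', w' + (2 * (a q : ZMod (2 * N)) - 1))) :=
  stmt_7_general n N a
end

section
/- Let a : Fin (n+1) → ℕ be strictly increasing, N ≥ 1, and suppose the range of a is a Sidon set modulo N. Then the group of edge-label-preserving automorphisms of S_N(a) acts transitively on the vertex set: for all x, y ∈ ZMod (2N) there exists a graph automorphism φ of S_N(a) with φ x = y such that, for every q : Fin (n+1), φ maps every edge with label a q to an edge with label a q. -/
/-!
Translations `v ↦ v + t` by even `t` and reflections `v ↦ c - v` about odd `c` are bijections of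
`ZMod (2N)` that send an edge `{w, w + d}` with `w` even and `d` odd to an edge `{w', w' + d}` with
`w'` even (for the reflection `w' = c - w - d`). Every difference `d = 2 a_r - 1` is odd, so these
maps are label-preserving automorphisms of `S_N(a)`. Given `x, y`, the translation by `y - x`
moves `x` to `y` when `y - x` is even, and otherwise the reflection about the odd point `x + y`
does.
-/

theorem ZMod.even_val_iff_castHom_eq_zero_s8 {n : ℕ} (h : 2 ∣ n) (v : ZMod n) :
    Even v.val ↔ ZMod.castHom h (ZMod 2) v = 0 := by
  rcases n with _ | n
  · exact Int.natAbs_even.trans <|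
      even_iff_two_dvd.trans (ZMod.intCast_zmod_eq_zero_iff_dvd v 2).symm
  · rw [even_iff_two_dvd, ← ZMod.natCast_eq_zero_iff, ZMod.castHom_apply, ZMod.natCast_val]

namespace SGraph

variable {N : ℕ}

def parity (N : ℕ) : ZMod (2 * N) →+* ZMod 2 :=
  ZMod.castHom (dvd_mul_right 2 N) (ZMod 2)

theorem even_val_iff_parity_eq_zero (v : ZMod (2 * N)) : Even v.val ↔ parity N v = 0 :=
  ZMod.even_val_iff_castHom_eq_zero_s8 _ v

theorem parity_two_mul (k : ZMod (2 * N)) : parity N (2 * k) = 0 := by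
  rw [map_mul, map_ofNat]
  exact zero_mul _

theorem parity_two_mul_sub_one (k : ZMod (2 * N)) : parity N (2 * k - 1) = 1 := by
  rw [map_sub, parity_two_mul, map_one]
  rfl

def MapsLabelledEdges (f : ZMod (2 * N) → ZMod (2 * N)) (d : ZMod (2 * N)) : Prop :=
  ∀ w : ZMod (2 * N), Even w.val →
    ∃ w' : ZMod (2 * N), Even w'.val ∧ s(f w, f (w + d)) = s(w', w' + d)

theorem mapsLabelledEdges_add_right {t : ZMod (2 * N)} (ht : parity N t = 0) (d : ZMod (2 * N)) :
    MapsLabelledEdges (· + t) d := by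
  intro w hw
  refine ⟨w + t, ?_, by rw [add_right_comm]⟩
  rw [even_val_iff_parity_eq_zero] at hw ⊢
  rw [map_add, hw, ht, add_zero]

theorem mapsLabelledEdges_sub_left {c d : ZMod (2 * N)} (hc : parity N c = 1)
    (hd : parity N d = 1) : MapsLabelledEdges (c - ·) d := by
  intro w hw
  refine ⟨c - (w + d), ?_, ?_⟩
  · rw [even_val_iff_parity_eq_zero] at hw ⊢
    rw [map_sub, map_add, hw, hc, hd, zero_add, sub_self]
  · dsimp only
    rw [Sym2.eq_swap, sub_add_eq_sub_sub, sub_add_cancel]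

theorem exists_equiv_mapsLabelledEdges (x y : ZMod (2 * N)) :
    ∃ e : ZMod (2 * N) ≃ ZMod (2 * N), e x = y ∧
      ∀ d, parity N d = 1 → MapsLabelledEdges e d ∧ MapsLabelledEdges e.symm d := by
  rcases (by decide : ∀ z : ZMod 2, z = 0 ∨ z = 1) (parity N (y - x)) with h | h
  · refine ⟨Equiv.addRight (y - x), add_sub_cancel x y, fun d _ => ⟨?_, ?_⟩⟩
    · exact mapsLabelledEdges_add_right h d
    · rw [Equiv.addRight_symm]
      exact mapsLabelledEdges_add_right (t := -(y - x)) (by rw [map_neg, h, neg_zero]) d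
  · have hc : parity N (x + y) = 1 := by
      rw [← h, show x + y = y - x + 2 * x by ring, map_add, parity_two_mul, add_zero]
    refine ⟨Equiv.subLeft (x + y), add_sub_cancel_left x y, fun d hd => ⟨?_, ?_⟩⟩
    · exact mapsLabelledEdges_sub_left hc hd
    · rw [Equiv.symm_subLeft]
      exact mapsLabelledEdges_sub_left hc hd

variable {n : ℕ} {a : Fin (n + 1) → ℕ}

theorem adj_map {f : ZMod (2 * N) → ZMod (2 * N)} (hf : f.Injective)
    (hfa : ∀ r, MapsLabelledEdges f (2 * (a r : ZMod (2 * N)) - 1)) {u w : ZMod (2 * N)}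
    (h : (SGraph n N a).Adj u w) : (SGraph n N a).Adj (f u) (f w) := by
  obtain ⟨hne, r, v, hv, huw⟩ := h
  obtain ⟨v', hv', hfv⟩ := hfa r v hv
  refine ⟨hf.ne hne, r, v', hv', ?_⟩
  rw [← hfv, ← Sym2.map_mk, huw, Sym2.map_mk]

def isoOfMapsLabelledEdges (e : ZMod (2 * N) ≃ ZMod (2 * N))
    (he : ∀ r, MapsLabelledEdges e (2 * (a r : ZMod (2 * N)) - 1))
    (he' : ∀ r, MapsLabelledEdges e.symm (2 * (a r : ZMod (2 * N)) - 1)) :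
    SGraph n N a ≃g SGraph n N a where
  toEquiv := e
  map_rel_iff' {u w} :=
    ⟨fun h => by simpa using adj_map e.symm.injective he' h, adj_map e.injective he⟩

end SGraph

theorem stmt_8_general (n N : ℕ) (a : Fin (n + 1) → ℕ) :
    ∀ x y : ZMod (2 * N),
      ∃ φ : SGraph n N a ≃g SGraph n N a,
        φ x = y ∧
        (∀ q : Fin (n + 1), ∀ w : ZMod (2 * N), Even w.val →
          ∃ w' : ZMod (2 * N), Even w'.val ∧
            s(φ w, φ (w + (2 * (a q : ZMod (2 * N)) - 1)))
              = s(w', w' + (2 * (a q : ZMod (2 * N)) - 1))) := by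
  intro x y
  obtain ⟨e, hexy, he⟩ := SGraph.exists_equiv_mapsLabelledEdges x y
  have hlabel (r : Fin (n + 1)) := he _ (SGraph.parity_two_mul_sub_one (a r : ZMod (2 * N)))
  exact ⟨SGraph.isoOfMapsLabelledEdges e (fun r => (hlabel r).1) (fun r => (hlabel r).2), hexy,
    fun q => (hlabel q).1⟩

/-- The group of edge-label-preserving automorphisms of `S_N(a)` acts
transitively on the vertex set. -/
theorem stmt_8 (n N : ℕ) (hN : 1 ≤ N) (a : Fin (n + 1) → ℕ)
    (ha : StrictMono a) (hS : IsSidonModSet N (Set.range a)) :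
    ∀ x y : ZMod (2 * N),
      ∃ φ : SGraph n N a ≃g SGraph n N a,
        φ x = y ∧
        (∀ q : Fin (n + 1), ∀ w : ZMod (2 * N), Even w.val →
          ∃ w' : ZMod (2 * N), Even w'.val ∧
            s(φ w, φ (w + (2 * (a q : ZMod (2 * N)) - 1)))
              = s(w', w' + (2 * (a q : ZMod (2 * N)) - 1))) :=
  stmt_8_general n N a
end

section
/- Let G be a connected simple graph on a vertex type V, let C be a type, and let c : Sym2 V → C be an edge-colouring that is locally injective (for all x, y, z, if G.Adj x y, G.Adj x z and c ⟦(x, y)⟧ = c ⟦(x, z)⟧, then y = z). Let φ be a graph automorphism of G preserving c, i.e. c ⟦(φ x, φ y)⟧ = c ⟦(x, y)⟧ whenever G.Adj x y. If φ fixes some vertex, then φ is the identity automorphism. -/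
/-- A colour-preserving automorphism of a connected graph with a locally
injective edge-colouring which fixes a vertex is the identity. -/
theorem stmt_9 {V C : Type*} (G : SimpleGraph V) (hG : G.Connected)
    (c : Sym2 V → C)
    (hloc : ∀ x y z : V, G.Adj x y → G.Adj x z → c s(x, y) = c s(x, z) → y = z)
    (φ : G ≃g G)
    (hφ : ∀ x y : V, G.Adj x y → c s(φ x, φ y) = c s(x, y))
    (hfix : ∃ x : V, φ x = x) :
    ∀ x : V, φ x = x := by
  obtain ⟨x₀, hx₀⟩ := hfix
  have key : ∀ {u v : V} (_ : G.Walk u v), φ u = u → φ v = v := by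
    intro u v w
    induction w with
    | nil => exact id
    | cons h p ih =>
      intro hu
      apply ih
      rename_i a b _
      have hadj : G.Adj a (φ b) := by
        have := φ.map_adj_iff.mpr h
        rwa [hu] at this
      have hc : c s(a, φ b) = c s(a, b) := by
        have := hφ a b h
        rwa [hu] at this
      exact hloc a (φ b) b hadj h hc
  intro x
  obtain ⟨w⟩ := hG x₀ x
  exact key w hx₀
end

section
/- Let G be a connected simple graph on a vertex type V, let c : Sym2 V → C be a locally injective edge-colouring (for all x, y, z, if G.Adj x y, G.Adj x z and c ⟦(x, y)⟧ = c ⟦(x, z)⟧, then y = z), and let φ be a graph automorphism of G preserving c. If there exist adjacent vertices x, y with {φ x, φ y} = {x, y} (as unordered pairs), then φ ∘ φ is the identity automorphism. -/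
/-- If a colour-preserving automorphism of a connected graph with a locally
injective edge-colouring stabilizes an edge, then it is an involution. -/
theorem stmt_10 {V C : Type*} (G : SimpleGraph V) (hG : G.Connected)
    (c : Sym2 V → C)
    (hloc : ∀ x y z : V, G.Adj x y → G.Adj x z → c s(x, y) = c s(x, z) → y = z)
    (φ : G ≃g G)
    (hφ : ∀ x y : V, G.Adj x y → c s(φ x, φ y) = c s(x, y))
    (hedge : ∃ x y : V, G.Adj x y ∧ s(φ x, φ y) = s(x, y)) :
    ∀ z : V, φ (φ z) = z := by
  obtain ⟨x, y, hxy, hs⟩ := hedge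
  have hx : φ (φ x) = x := by
    rw [Sym2.eq_iff] at hs
    rcases hs with ⟨h1, h2⟩ | ⟨h1, h2⟩
    · rw [h1, h1]
    · rw [h1, h2]
  have step : ∀ a b : V, G.Adj a b → φ (φ a) = a → φ (φ b) = b := by
    intro a b hab ha
    have hadj2 : G.Adj (φ (φ a)) (φ (φ b)) := φ.map_adj_iff.mpr (φ.map_adj_iff.mpr hab)
    rw [ha] at hadj2
    have hc : c s(a, φ (φ b)) = c s(a, b) := by
      have h1 := hφ (φ a) (φ b) (φ.map_adj_iff.mpr hab)
      rw [ha] at h1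
      rw [h1]
      exact hφ a b hab
    exact hloc a (φ (φ b)) b hadj2 hab hc
  have key : ∀ (a b : V), G.Walk a b → φ (φ a) = a → φ (φ b) = b := by
    intro a b w
    induction w with
    | nil => exact id
    | cons h p ih => exact fun ha => ih (step _ _ h ha)
  intro z
  obtain ⟨w⟩ := hG x z
  exact key x z w hx
end

section
/- Let G be a simple graph on a vertex type V, let κ : V → Bool be a proper 2-colouring of the vertices (κ x ≠ κ y whenever G.Adj x y), and let c : Sym2 V → C be a locally injective edge-colouring (for all x, y, z, if G.Adj x y, G.Adj x z and c ⟦(x, y)⟧ = c ⟦(x, z)⟧, then y = z). Suppose that for all vertices u, u' with κ u = κ u' there exists a graph automorphism of G preserving both κ and c and sending u to u'. Then for any adjacent pairs (x, y) and (x', y') with c ⟦(x, y)⟧ = c ⟦(x', y')⟧, there exists a graph automorphism φ of G preserving both κ and c with {φ x, φ y} = {x', y'}; that is, the colour-preserving automorphism group acts transitively on the edges of each single edge-colour. -/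
/-- If the colour-preserving automorphism group of a properly 2-coloured graph
with a locally injective edge-colouring is transitive on each vertex-colour
class, then it is transitive on the edges of each single edge-colour. -/
theorem stmt_11 {V C : Type*} (G : SimpleGraph V) (κ : V → Bool)
    (hκ : ∀ x y : V, G.Adj x y → κ x ≠ κ y)
    (c : Sym2 V → C)
    (hloc : ∀ x y z : V, G.Adj x y → G.Adj x z → c s(x, y) = c s(x, z) → y = z)
    (htrans : ∀ u u' : V, κ u = κ u' →
      ∃ φ : G ≃g G, (∀ x : V, κ (φ x) = κ x) ∧
        (∀ x y : V, G.Adj x y → c s(φ x, φ y) = c s(x, y)) ∧ φ u = u') :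
    ∀ x y x' y' : V, G.Adj x y → G.Adj x' y' → c s(x, y) = c s(x', y') →
      ∃ φ : G ≃g G, (∀ z : V, κ (φ z) = κ z) ∧
        (∀ z w : V, G.Adj z w → c s(φ z, φ w) = c s(z, w)) ∧
        s(φ x, φ y) = s(x', y') := by
  intro x y x' y' hxy hx'y' hc
  have key : ∀ a b : V, G.Adj a b → κ x = κ a → c s(a, b) = c s(x, y) →
      ∃ φ : G ≃g G, (∀ z : V, κ (φ z) = κ z) ∧
        (∀ z w : V, G.Adj z w → c s(φ z, φ w) = c s(z, w)) ∧
        s(φ x, φ y) = s(a, b) := by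
    intro a b hab hk hcc
    obtain ⟨φ, h1, h2, h3⟩ := htrans x a hk
    refine ⟨φ, h1, h2, ?_⟩
    have hadj : G.Adj a (φ y) := by
      have := φ.map_adj_iff.mpr hxy
      rwa [h3] at this
    have hce : c s(a, φ y) = c s(a, b) := by
      rw [hcc, ← h3]; exact h2 x y hxy
    have := hloc a (φ y) b hadj hab hce
    rw [h3, this]
  by_cases hk : κ x = κ x'
  · exact key x' y' hx'y' hk hc.symm
  · have hk2 : κ x = κ y' := by
      have h1 := hκ x' y' hx'y'
      revert hk h1; cases κ x <;> cases κ x' <;> cases κ y' <;> simp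
    obtain ⟨φ, h1, h2, h3⟩ :=
      key y' x' hx'y'.symm hk2 (by rw [Sym2.eq_swap]; exact hc.symm)
    exact ⟨φ, h1, h2, by rw [h3, Sym2.eq_swap]⟩
end
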